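/- With τ = √N·Δ for N-QAM with minimum distance Δ, if u ∈ ℂ^K has every entry a QAM symbol and l ∈ (ℤ + jℤ)^K is a nonzero Gaussian-integer vector, then ‖u + τ·l‖² > ‖u‖². -/

import Mathlib

open Complex

/-! Each real or imaginary part `x` of a QAM symbol satisfies `2|x| ≤ τ - Δ < τ`. Shifting such
an `x` by a nonzero integer multiple of `τ` lands at distance at least `τ - |x| > |x|` from `0`, so
no coordinate loses energy and every coordinate where `l ≠ 0` gains some. -/

section ShiftByLattice

variable {x τ : ℝ}

theorem abs_lt_abs_add_mul_int (hx : 2 * |x| < τ) {m : ℤ} (hm : m ≠ 0) :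
    |x| < |x + τ * m| := by
  have hτ : 0 < τ := lt_of_le_of_lt (by positivity) hx
  have hm_abs : (1 : ℝ) ≤ |(m : ℝ)| := by exact_mod_cast Int.one_le_abs hm
  have hshift : τ ≤ |τ * m| := by
    rw [abs_mul, abs_of_pos hτ]
    exact le_mul_of_one_le_right hτ.le hm_abs
  calc |x| < τ - |x| := by linarith
    _ ≤ |τ * m| - |x| := by linarith
    _ ≤ |x + τ * m| := by simpa [add_comm] using abs_sub_abs_le_abs_add (τ * m) x

theorem sq_lt_sq_add_mul_int (hx : 2 * |x| < τ) {m : ℤ} (hm : m ≠ 0) :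
    x ^ 2 < (x + τ * m) ^ 2 :=
  sq_lt_sq.mpr (abs_lt_abs_add_mul_int hx hm)

theorem sq_le_sq_add_mul_int (hx : 2 * |x| < τ) (m : ℤ) : x ^ 2 ≤ (x + τ * m) ^ 2 := by
  rcases eq_or_ne m 0 with rfl | hm
  · simp
  · exact (sq_lt_sq_add_mul_int hx hm).le

end ShiftByLattice

section GaussianShift

variable {z : ℂ} {τ : ℝ}

theorem norm_add_mul_gaussian_sq (z : ℂ) (τ : ℝ) (a b : ℤ) :
    ‖z + τ * (a + b * I)‖ ^ 2 = (z.re + τ * a) ^ 2 + (z.im + τ * b) ^ 2 := by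
  rw [Complex.sq_norm, normSq_apply]
  simp only [add_re, add_im, mul_re, mul_im, ofReal_re, ofReal_im, intCast_re, intCast_im,
    I_re, I_im]
  ring

theorem norm_sq_eq_re_sq_add_im_sq (z : ℂ) : ‖z‖ ^ 2 = z.re ^ 2 + z.im ^ 2 := by
  rw [Complex.sq_norm, normSq_apply]
  ring

theorem norm_sq_le_norm_add_mul_gaussian_sq (hre : 2 * |z.re| < τ) (him : 2 * |z.im| < τ)
    (a b : ℤ) : ‖z‖ ^ 2 ≤ ‖z + τ * (a + b * I)‖ ^ 2 := by
  rw [norm_add_mul_gaussian_sq, norm_sq_eq_re_sq_add_im_sq]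
  exact add_le_add (sq_le_sq_add_mul_int hre a) (sq_le_sq_add_mul_int him b)

theorem norm_sq_lt_norm_add_mul_gaussian_sq (hre : 2 * |z.re| < τ) (him : 2 * |z.im| < τ)
    {a b : ℤ} (hab : (a : ℂ) + b * I ≠ 0) : ‖z‖ ^ 2 < ‖z + τ * (a + b * I)‖ ^ 2 := by
  rw [norm_add_mul_gaussian_sq, norm_sq_eq_re_sq_add_im_sq]
  by_cases ha : a = 0
  · have hb : b ≠ 0 := by rintro rfl; simp [ha] at hab
    exact add_lt_add_of_le_of_lt (sq_le_sq_add_mul_int hre a) (sq_lt_sq_add_mul_int him hb)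
  · exact add_lt_add_of_lt_of_le (sq_lt_sq_add_mul_int hre ha) (sq_le_sq_add_mul_int him b)

end GaussianShift

theorem qam_perturbed_vector_power_general (K n : ℕ)
    (Δ : ℝ) (hΔ : 0 < Δ) (τ : ℝ) (hτ : τ = (n : ℝ) * Δ)
    (u : Fin K → ℂ)
    (hu : ∀ k, (∃ a : ℤ, (u k).re = (2 * (a : ℝ) + 1) * (Δ / 2)) ∧
               (∃ b : ℤ, (u k).im = (2 * (b : ℝ) + 1) * (Δ / 2)) ∧
               |(u k).re| ≤ ((n : ℝ) - 1) * Δ / 2 ∧ |(u k).im| ≤ ((n : ℝ) - 1) * Δ / 2)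
    (l : Fin K → ℂ) (hl : ∀ k, ∃ a b : ℤ, l k = (a : ℂ) + (b : ℂ) * Complex.I)
    (hl0 : l ≠ 0) :
    ∑ k, ‖u k + (τ : ℂ) * l k‖ ^ 2 > ∑ k, ‖u k‖ ^ 2 := by
  have hinside : ∀ k, 2 * |(u k).re| < τ ∧ 2 * |(u k).im| < τ := by
    intro k
    obtain ⟨-, -, hre, him⟩ := hu k
    subst hτ
    constructor <;> linarith
  have hle : ∀ k, ‖u k‖ ^ 2 ≤ ‖u k + τ * l k‖ ^ 2 := by
    intro k
    obtain ⟨a, b, hab⟩ := hl k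
    rw [hab]
    exact norm_sq_le_norm_add_mul_gaussian_sq (hinside k).1 (hinside k).2 a b
  obtain ⟨k₀, hk₀⟩ := Function.ne_iff.mp hl0
  have hlt : ‖u k₀‖ ^ 2 < ‖u k₀ + τ * l k₀‖ ^ 2 := by
    obtain ⟨a, b, hab⟩ := hl k₀
    rw [hab] at hk₀ ⊢
    exact norm_sq_lt_norm_add_mul_gaussian_sq (hinside k₀).1 (hinside k₀).2 hk₀
  exact Finset.sum_lt_sum (fun k _ => hle k) ⟨k₀, Finset.mem_univ _, hlt⟩

/-- with `τ = √N·Δ = n·Δ` for square `N`-QAM (`N = n²`) of minimum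
distance `Δ`, if every entry of `u` is a QAM symbol (real and imaginary parts odd
multiples of `Δ/2` of absolute value at most `(n-1)Δ/2`) and `l` is a nonzero
Gaussian-integer vector, then `‖u + τl‖² > ‖u‖²`. -/
theorem qam_perturbed_vector_power (K n N : ℕ) (hn : 2 ≤ n) (hN : N = n ^ 2)
    (Δ : ℝ) (hΔ : 0 < Δ) (τ : ℝ) (hτ : τ = (n : ℝ) * Δ)
    (u : Fin K → ℂ)
    (hu : ∀ k, (∃ a : ℤ, (u k).re = (2 * (a : ℝ) + 1) * (Δ / 2)) ∧
               (∃ b : ℤ, (u k).im = (2 * (b : ℝ) + 1) * (Δ / 2)) ∧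
               |(u k).re| ≤ ((n : ℝ) - 1) * Δ / 2 ∧ |(u k).im| ≤ ((n : ℝ) - 1) * Δ / 2)
    (l : Fin K → ℂ) (hl : ∀ k, ∃ a b : ℤ, l k = (a : ℂ) + (b : ℂ) * Complex.I)
    (hl0 : l ≠ 0) :
    ∑ k, ‖u k + (τ : ℂ) * l k‖ ^ 2 > ∑ k, ‖u k‖ ^ 2 :=
  qam_perturbed_vector_power_general K n Δ hΔ τ hτ u hu l hl hl0
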